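/- arXiv:2601.02895 — 2 statements merged into one kernel-verified Lean document; each statement's English description precedes it below -/
import Mathlib

section
/- Let (A, M) be a dg Lie-Rinehart pair over a field k of characteristic zero and let f₀: A → B be a morphism of cdgas. Define f₀^!M as the pullback of dg B-modules Der(B) ×_{Der(A,B)} (B⊗_A M), where Der(B) → Der(A,B) is precomposition with f₀ and B⊗_A M → Der(A,B) sends b⊗m to b·(f₀∘Γ(m)). Then the bracket [(ρ, Σᵢ bᵢ⊗mᵢ), (ρ′, Σⱼ cⱼ⊗nⱼ)] = ([ρ,ρ′], Σ_{i,j} (−1)^{|mᵢ||cⱼ|} bᵢcⱼ⊗[mᵢ,nⱼ] + Σⱼ ρ(cⱼ)⊗nⱼ − (−1)^{|ρ′|(|bᵢ|+|mᵢ|)} Σᵢ ρ′(bᵢ)⊗mᵢ) is well-defined on f₀^!M and, together with the anchor given by projection to Der(B), makes (B, f₀^!M) a dg Lie-Rinehart pair. -/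
/-!
None of the three summands of the bracket is `A`-balanced on `B ⊗[A] M`, so the bracket is
computed on representatives in `B ⊗[ℤ] M`. There the formula is the bracket of a semidirect
product `Der(B) ⋉ (B ⊗[ℤ] M)`, and antisymmetry, the Jacobi identity and the Leibniz rule hold
for all pairs, by computation on pure tensors. It descends to `f₀^!M` because, once the right
argument `(ρ', y)` satisfies the anchor condition, the defects of `A`-balancedness of
`b ⊗ m ↦ [b ⊗ m, y]` and of `b ⊗ m ↦ ρ'(b) ⊗ m` are `b · anchor(y)(a) ⊗ m` and
`b · ρ'(f₀ a) ⊗ m`, which agree; antisymmetry moves this to the left argument. That the bracket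
again satisfies the anchor condition comes from `Γ` being a morphism of Lie algebras.
-/

open TensorProduct

/-- `s ⊗ m ↦ s · f₀(Γ(m)(r))` : the map `B ⊗_A M → Der(A, B)` (evaluated at `r : A`) used to
define the Lie–Rinehart pullback. -/
noncomputable def anchorPush (k R S Mod : Type*) [CommRing k] [CommRing R] [CommRing S]
    [Algebra k R] [Algebra R S]
    [AddCommGroup Mod] [Module R Mod]
    (Γ : Mod →ₗ[R] Derivation k R R) (r : R) : S ⊗[R] Mod →ₗ[S] S :=
  TensorProduct.AlgebraTensorModule.lift
    { toFun := fun s =>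
        { toFun := fun m => s * algebraMap R S (Γ m r)
          map_add' := by intro m n; simp [mul_add]
          map_smul' := by
            intro c m
            simp only [map_smul, RingHom.id_apply, Derivation.smul_apply, smul_eq_mul,
              map_mul, Algebra.smul_def]
            ring }
      map_add' := by intro s t; ext m; simp [add_mul]
      map_smul' := by intro s t; ext m; simp [Algebra.smul_def, mul_assoc] }

/-- The underlying `B`-module of the Lie–Rinehart pullback
`f₀^!M = Der(B) ×_{Der(A,B)} (B ⊗_A M)`, where `Der(B) → Der(A,B)` is precomposition with
`f₀ = algebraMap A B` and `B ⊗_A M → Der(A,B)` sends `b ⊗ m` to `b·(f₀ ∘ Γ(m))`. -/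
noncomputable def lrPullback (k A B M : Type*) [CommRing k] [CommRing A] [CommRing B]
    [Algebra k A] [Algebra k B] [Algebra A B]
    [AddCommGroup M] [Module A M]
    (ΓM : M →ₗ[A] Derivation k A A) :
    Submodule B (Derivation k B B × (B ⊗[A] M)) where
  carrier := {p | ∀ a : A, p.1 (algebraMap A B a) = anchorPush k A B M ΓM a p.2}
  add_mem' := by
    intro p q hp hq a
    simp only [Prod.fst_add, Prod.snd_add, map_add, Derivation.add_apply]
    rw [hp a, hq a]
  zero_mem' := by
    intro a
    simp
  smul_mem' := by
    intro b p hp a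
    simp only [Prod.smul_fst, Prod.smul_snd, map_smul, Derivation.smul_apply]
    rw [hp a]

namespace TensorProduct

theorem eq_of_mapOfCompatibleSMul_eq {R A S M N P : Type*} [CommSemiring R] [CommSemiring A]
    [CommSemiring S] [AddCommMonoid M] [AddCommMonoid N] [AddCommMonoid P] [Module R M]
    [Module R N] [Module A M] [Module A N] [SMulCommClass R A M] [Module S M]
    [SMulCommClass R S M] [SMulCommClass A S M] [CompatibleSMul R A M N]
    (φ : M ⊗[A] N →+ P)
    (hφ : ∀ (r : R) (m : M) (n : N), φ ((r • m) ⊗ₜ n) = φ (m ⊗ₜ (r • n))) {x y : M ⊗[A] N}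
    (h : mapOfCompatibleSMul R A S M N x = mapOfCompatibleSMul R A S M N y) : φ x = φ y := by
  let ψ : M ⊗[R] N →+ P := liftAddHom
    { toFun := fun m => φ.comp (mk A M N m).toAddMonoidHom
      map_zero' := by ext; simp
      map_add' := fun m m' => by ext; simp } hφ
  have hψ (z : M ⊗[A] N) : ψ (mapOfCompatibleSMul R A S M N z) = φ z := by
    induction z with
    | zero => simp
    | tmul m n => rfl
    | add z z' hz hz' => simp [hz, hz']
  rw [← hψ x, ← hψ y, h]

end TensorProduct

def LinearMap.ofBiadditive {X Y Z : Type*} [AddCommGroup X] [AddCommGroup Y] [AddCommGroup Z]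
    (f : X → Y → Z) (h₁ : ∀ x x' y, f (x + x') y = f x y + f x' y)
    (h₂ : ∀ x y y', f x (y + y') = f x y + f x y') : X →ₗ[ℤ] Y →ₗ[ℤ] Z :=
  LinearMap.mk₂ ℤ f h₁ (fun c x y => map_zsmul (AddMonoidHom.mk' (f · y) (h₁ · · y)) c x)
    h₂ (fun c x y => map_zsmul (AddMonoidHom.mk' (f x) (h₂ x)) c y)

section Semidirect

variable {k B M : Type*} [CommRing k] [CommRing B] [Algebra k B] [AddCommGroup M]
  (β : M →ₗ[ℤ] M →ₗ[ℤ] M)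

def tensorBracket : B ⊗[ℤ] M →ₗ[ℤ] B ⊗[ℤ] M →ₗ[ℤ] B ⊗[ℤ] M :=
  map₂ (LinearMap.mul ℤ B) β

@[simp] lemma tensorBracket_tmul (b c : B) (m n : M) :
    tensorBracket β (b ⊗ₜ m) (c ⊗ₜ n) = (b * c) ⊗ₜ β m n := rfl

def derivTensor (ρ : Derivation k B B) : B ⊗[ℤ] M →ₗ[ℤ] B ⊗[ℤ] M :=
  LinearMap.rTensor M (ρ : B →ₗ[k] B).toAddMonoidHom.toIntLinearMap

@[simp] lemma derivTensor_tmul (ρ : Derivation k B B) (b : B) (m : M) :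
    derivTensor ρ (b ⊗ₜ m) = ρ b ⊗ₜ m := rfl

lemma tensorBracket_swap (hanti : ∀ m n, β m n = -β n m) (T S : B ⊗[ℤ] M) :
    tensorBracket β T S = -tensorBracket β S T := by
  induction T with
  | zero => simp
  | add T T' hT hT' => simp [hT, hT', add_comm]
  | tmul b m =>
    induction S with
    | zero => simp
    | add S S' hS hS' => simp [hS, hS', add_comm]
    | tmul c n => simp [hanti m n, mul_comm, tmul_neg]

lemma tensorBracket_jacobi (hjac : ∀ m n p, β m (β n p) = β (β m n) p + β n (β m p))
    (T S U : B ⊗[ℤ] M) :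
    tensorBracket β T (tensorBracket β S U) =
      tensorBracket β (tensorBracket β T S) U + tensorBracket β S (tensorBracket β T U) := by
  induction T with
  | zero => simp
  | add T T' hT hT' => simp only [map_add, LinearMap.add_apply, hT, hT']; abel
  | tmul b m =>
    induction S with
    | zero => simp
    | add S S' hS hS' => simp only [map_add, LinearMap.add_apply, hS, hS']; abel
    | tmul c n =>
      induction U with
      | zero => simp
      | add U U' hU hU' => simp only [map_add, hU, hU']; abel
      | tmul d p =>
        simp only [tensorBracket_tmul]
        rw [hjac, tmul_add, mul_assoc, mul_left_comm b c]

lemma tensorBracket_smul_right (b : B) (T S : B ⊗[ℤ] M) :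
    tensorBracket β T (b • S) = b • tensorBracket β T S := by
  induction T with
  | zero => simp
  | add T T' hT hT' => simp [hT, hT']
  | tmul b' m =>
    induction S with
    | zero => simp
    | add S S' hS hS' => simp [hS, hS']
    | tmul c n => simp [smul_tmul', mul_left_comm]

lemma derivTensor_add (ρ ρ' : Derivation k B B) (T : B ⊗[ℤ] M) :
    derivTensor (ρ + ρ') T = derivTensor ρ T + derivTensor ρ' T := by
  induction T with
  | zero => simp
  | add T T' hT hT' => simp only [map_add, hT, hT']; abel
  | tmul b m => simp [add_tmul]

lemma derivTensor_lie (ρ ρ' : Derivation k B B) (T : B ⊗[ℤ] M) :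
    derivTensor ⁅ρ, ρ'⁆ T =
      derivTensor ρ (derivTensor ρ' T) - derivTensor ρ' (derivTensor ρ T) := by
  induction T with
  | zero => simp
  | add T T' hT hT' => simp only [map_add, hT, hT']; abel
  | tmul b m => simp [Derivation.commutator_apply, sub_tmul]

lemma derivTensor_smul_left (ρ : Derivation k B B) (b : B) (T : B ⊗[ℤ] M) :
    derivTensor (b • ρ) T = b • derivTensor ρ T := by
  induction T with
  | zero => simp
  | add T T' hT hT' => simp [hT, hT']
  | tmul c n => simp [smul_tmul']

lemma derivTensor_smul (ρ : Derivation k B B) (b : B) (T : B ⊗[ℤ] M) :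
    derivTensor ρ (b • T) = ρ b • T + b • derivTensor ρ T := by
  induction T with
  | zero => simp
  | add T T' hT hT' => simp only [smul_add, map_add, hT, hT']; abel
  | tmul c n => simp [smul_tmul', add_tmul, add_comm, mul_comm]

lemma derivTensor_tensorBracket (ρ : Derivation k B B) (T S : B ⊗[ℤ] M) :
    derivTensor ρ (tensorBracket β T S) =
      tensorBracket β (derivTensor ρ T) S + tensorBracket β T (derivTensor ρ S) := by
  induction T with
  | zero => simp
  | add T T' hT hT' => simp only [map_add, LinearMap.add_apply, hT, hT']; abel
  | tmul b m =>
    induction S with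
    | zero => simp
    | add S S' hS hS' => simp only [map_add, hS, hS']; abel
    | tmul c n => simp [add_tmul, mul_comm, add_comm]

def semidirectBracket (p q : Derivation k B B × B ⊗[ℤ] M) : Derivation k B B × B ⊗[ℤ] M :=
  (⁅p.1, q.1⁆, tensorBracket β p.2 q.2 + derivTensor p.1 q.2 - derivTensor q.1 p.2)

lemma semidirectBracket_add_left (p p' q : Derivation k B B × B ⊗[ℤ] M) :
    semidirectBracket β (p + p') q = semidirectBracket β p q + semidirectBracket β p' q := by
  ext1
  · exact add_lie _ _ _
  · simp only [semidirectBracket, Prod.fst_add, Prod.snd_add, map_add, LinearMap.add_apply,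
      derivTensor_add]
    abel

lemma semidirectBracket_add_right (p q q' : Derivation k B B × B ⊗[ℤ] M) :
    semidirectBracket β p (q + q') = semidirectBracket β p q + semidirectBracket β p q' := by
  ext1
  · exact lie_add _ _ _
  · simp only [semidirectBracket, Prod.fst_add, Prod.snd_add, map_add, derivTensor_add]
    abel

lemma semidirectBracket_swap (hanti : ∀ m n, β m n = -β n m)
    (p q : Derivation k B B × B ⊗[ℤ] M) :
    semidirectBracket β p q = -semidirectBracket β q p := by
  ext1
  · exact (lie_skew _ _).symm
  · simp only [semidirectBracket, Prod.snd_neg, tensorBracket_swap β hanti p.2]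
    abel

lemma semidirectBracket_jacobi (hanti : ∀ m n, β m n = -β n m)
    (hjac : ∀ m n p, β m (β n p) = β (β m n) p + β n (β m p))
    (p q r : Derivation k B B × B ⊗[ℤ] M) :
    semidirectBracket β p (semidirectBracket β q r) =
      semidirectBracket β (semidirectBracket β p q) r +
        semidirectBracket β q (semidirectBracket β p r) := by
  ext1
  · exact leibniz_lie _ _ _
  · simp only [semidirectBracket, Prod.snd_add, map_add, map_sub, LinearMap.add_apply,
      LinearMap.sub_apply, derivTensor_tensorBracket, derivTensor_lie]
    rw [tensorBracket_jacobi β hjac, tensorBracket_swap β hanti q.2 (derivTensor r.1 p.2)]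
    abel

lemma semidirectBracket_smul_right (b : B) (p q : Derivation k B B × B ⊗[ℤ] M) :
    semidirectBracket β p (b • q) = p.1 b • q + b • semidirectBracket β p q := by
  ext1
  · simp only [semidirectBracket, Prod.smul_fst, Prod.fst_add, LieRinehartRing.leibniz_smul_right,
      Derivation.bracket_eq_fun]
    exact add_comm _ _
  · simp only [semidirectBracket, Prod.smul_fst, Prod.smul_snd, Prod.snd_add, smul_sub, smul_add,
      tensorBracket_smul_right, derivTensor_smul, derivTensor_smul_left]
    abel

end Semidirect

section Anchor

variable {k A B M : Type*} [CommRing k] [CommRing A] [CommRing B] [Algebra k A]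
  [AddCommGroup M] [Module A M] (Γ : M →ₗ[A] Derivation k A A)

-- `g = algebraMap A B` gives the anchor of a representative; the anchor of a bracket also
-- involves `g = ρ ∘ algebraMap A B`.
def tensorAnchor (g : A →+ B) : B ⊗[ℤ] M →ₗ[ℤ] A →+ B :=
  TensorProduct.lift <| LinearMap.ofBiadditive
    (fun b m => (AddMonoidHom.mulLeft b).comp (g.comp (Γ m : A →ₗ[k] A).toAddMonoidHom))
    (fun b b' m => by ext; simp [add_mul]) (fun b m m' => by ext; simp [mul_add])

@[simp] lemma tensorAnchor_tmul (g : A →+ B) (b : B) (m : M) (a : A) :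
    tensorAnchor Γ g (b ⊗ₜ m) a = b * g (Γ m a) := rfl

lemma tensorAnchor_add_left (g g' : A →+ B) (T : B ⊗[ℤ] M) :
    tensorAnchor Γ (g + g') T = tensorAnchor Γ g T + tensorAnchor Γ g' T := by
  induction T with
  | zero => simp
  | add T T' hT hT' => simp only [map_add, hT, hT']; abel
  | tmul b m => ext; simp [mul_add]

lemma tensorAnchor_zero_left (T : B ⊗[ℤ] M) : tensorAnchor Γ 0 T = 0 := by
  simpa using tensorAnchor_add_left Γ 0 0 T

variable [Algebra A B]

lemma tensorAnchor_derivTensor [Algebra k B] (ρ : Derivation k B B) (T : B ⊗[ℤ] M) :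
    tensorAnchor Γ (algebraMap A B) (derivTensor ρ T) =
      (ρ : B →+ B).comp (tensorAnchor Γ (algebraMap A B) T) -
        tensorAnchor Γ ((ρ : B →+ B).comp (algebraMap A B)) T := by
  induction T with
  | zero => ext; simp
  | add T T' hT hT' => simp only [map_add, hT, hT', AddMonoidHom.comp_add]; abel
  | tmul b m => ext; simp [Derivation.leibniz, mul_comm]

lemma tensorAnchor_tensorBracket (β : M →ₗ[ℤ] M →ₗ[ℤ] M)
    (hΓlie : ∀ m n, Γ (β m n) = ⁅Γ m, Γ n⁆) (T S : B ⊗[ℤ] M) :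
    tensorAnchor Γ (algebraMap A B) (tensorBracket β T S) =
      tensorAnchor Γ (tensorAnchor Γ (algebraMap A B) T) S -
        tensorAnchor Γ (tensorAnchor Γ (algebraMap A B) S) T := by
  induction T with
  | zero => simp [tensorAnchor_zero_left]
  | add T T' hT hT' =>
    simp only [map_add, LinearMap.add_apply, hT, hT', tensorAnchor_add_left]; abel
  | tmul b m =>
    induction S with
    | zero => simp [tensorAnchor_zero_left]
    | add S S' hS hS' => simp only [map_add, hS, hS', tensorAnchor_add_left]; abel
    | tmul c n => ext; simp [hΓlie, Derivation.commutator_apply]; ring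

variable [Algebra k B]

def lrPullbackInt : AddSubgroup (Derivation k B B × B ⊗[ℤ] M) where
  carrier := {p | ∀ a : A, p.1 (algebraMap A B a) = tensorAnchor Γ (algebraMap A B) p.2 a}
  add_mem' hp hq a := by simp [hp a, hq a]
  zero_mem' a := by simp
  neg_mem' hp a := by simp [hp a]

lemma semidirectBracket_mem (β : M →ₗ[ℤ] M →ₗ[ℤ] M) (hΓlie : ∀ m n, Γ (β m n) = ⁅Γ m, Γ n⁆)
    {p q : Derivation k B B × B ⊗[ℤ] M} (hp : p ∈ lrPullbackInt Γ)
    (hq : q ∈ lrPullbackInt Γ) :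
    semidirectBracket β p q ∈ lrPullbackInt Γ := by
  have hp' : (p.1 : B →+ B).comp (algebraMap A B) = tensorAnchor Γ (algebraMap A B) p.2 :=
    AddMonoidHom.ext hp
  have hq' : (q.1 : B →+ B).comp (algebraMap A B) = tensorAnchor Γ (algebraMap A B) q.2 :=
    AddMonoidHom.ext hq
  intro a
  simp only [semidirectBracket, map_add, map_sub, tensorAnchor_tensorBracket Γ β hΓlie,
    tensorAnchor_derivTensor, ← hp', ← hq']
  -- the terms twisted by `p.1 ∘ algebraMap A B` and `q.1 ∘ algebraMap A B` cancel in pairs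
  simp [Derivation.commutator_apply]

end Anchor

section Projection

variable {k A B M : Type*} [CommRing k] [CommRing A] [CommRing B] [Algebra k B] [Algebra A B]
  [AddCommGroup M] [Module A M]

variable (A) in
noncomputable def lrProj :
    Derivation k B B × B ⊗[ℤ] M →ₗ[B] Derivation k B B × B ⊗[A] M :=
  LinearMap.id.prodMap (mapOfCompatibleSMul A ℤ B B M)

lemma lrProj_apply (p : Derivation k B B × B ⊗[ℤ] M) :
    lrProj A p = (p.1, mapOfCompatibleSMul A ℤ B B M p.2) := rfl

lemma mapOfCompatibleSMul_derivTensor_smul_tmul_sub (ρ : Derivation k B B) (a : A) (b : B)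
    (m : M) :
    mapOfCompatibleSMul A ℤ B B M
        (derivTensor ρ ((a • b) ⊗ₜ m) - derivTensor ρ (b ⊗ₜ (a • m))) =
      (b * ρ (algebraMap A B a)) ⊗ₜ m := by
  rw [derivTensor_tmul, derivTensor_tmul, map_sub, mapOfCompatibleSMul_tmul,
    mapOfCompatibleSMul_tmul, ← smul_tmul, Algebra.smul_def, Derivation.leibniz, add_tmul,
    smul_eq_mul, smul_eq_mul, Algebra.smul_def]
  abel

end Projection

section Descent

variable {k A B M : Type*} [CommRing k] [CommRing A] [CommRing B] [Algebra k A]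
  [Algebra A B] [AddCommGroup M] [Module A M] (Γ : M →ₗ[A] Derivation k A A)
  (β : M →ₗ[ℤ] M →ₗ[ℤ] M)

lemma anchorPush_mapOfCompatibleSMul (a : A) (T : B ⊗[ℤ] M) :
    anchorPush k A B M Γ a (mapOfCompatibleSMul A ℤ B B M T) =
      tensorAnchor Γ (algebraMap A B) T a := by
  induction T with
  | zero => simp
  | add T T' hT hT' => simp [hT, hT']
  | tmul b m => rfl

lemma mapOfCompatibleSMul_tensorBracket_smul_tmul_sub (hanti : ∀ m n, β m n = -β n m)
    (hleib : ∀ (m n : M) (a : A), β m (a • n) = Γ m a • n + a • β m n)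
    (a : A) (b : B) (m : M) (S : B ⊗[ℤ] M) :
    mapOfCompatibleSMul A ℤ B B M
        (tensorBracket β ((a • b) ⊗ₜ m) S - tensorBracket β (b ⊗ₜ (a • m)) S) =
      (b * tensorAnchor Γ (algebraMap A B) S a) ⊗ₜ m := by
  induction S with
  | zero => simp
  | add S S' hS hS' =>
    simp only [map_add, map_sub, AddMonoidHom.add_apply, mul_add, add_tmul] at hS hS' ⊢
    rw [← hS, ← hS']
    abel
  | tmul c n =>
    have hsmul : β (a • m) n = a • β m n - Γ n a • m := by
      rw [hanti, hleib, hanti n m]; simp only [smul_neg]; abel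
    rw [tensorBracket_tmul, tensorBracket_tmul, hsmul, tmul_sub, map_sub, map_sub,
      mapOfCompatibleSMul_tmul, mapOfCompatibleSMul_tmul, mapOfCompatibleSMul_tmul, ← smul_tmul,
      ← smul_tmul, smul_mul_assoc, sub_sub_cancel, tensorAnchor_tmul, Algebra.smul_def,
      AddMonoidHom.coe_coe]
    congr 1
    ring

variable [Algebra k B]

lemma mem_lrPullbackInt_iff {p : Derivation k B B × B ⊗[ℤ] M} :
    p ∈ lrPullbackInt Γ ↔ lrProj A p ∈ lrPullback k A B M Γ :=
  forall_congr' fun a => by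
    rw [← anchorPush_mapOfCompatibleSMul]
    rfl

lemma exists_lrProj_eq {x : Derivation k B B × B ⊗[A] M} (hx : x ∈ lrPullback k A B M Γ) :
    ∃ p ∈ lrPullbackInt Γ, lrProj A p = x := by
  obtain ⟨T, hT⟩ := mapOfCompatibleSMul_surjective A ℤ B B M x.2
  have hp : lrProj A (x.1, T) = x := Prod.ext rfl hT
  exact ⟨(x.1, T), (mem_lrPullbackInt_iff Γ).mpr (hp ▸ hx), hp⟩

lemma lrProj_semidirectBracket_left (hanti : ∀ m n, β m n = -β n m)
    (hleib : ∀ (m n : M) (a : A), β m (a • n) = Γ m a • n + a • β m n)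
    {p p' q : Derivation k B B × B ⊗[ℤ] M} (hq : q ∈ lrPullbackInt Γ)
    (h : lrProj A p = lrProj A p') :
    lrProj A (semidirectBracket β p q) = lrProj A (semidirectBracket β p' q) := by
  rw [lrProj_apply, lrProj_apply, Prod.mk.injEq] at h
  let φ : B ⊗[ℤ] M →+ B ⊗[A] M := AddMonoidHom.mk'
    (fun T => mapOfCompatibleSMul A ℤ B B M (tensorBracket β T q.2 - derivTensor q.1 T))
    (fun T T' => by simp only [map_add, LinearMap.add_apply, map_sub]; abel)
  have hφ : φ p.2 = φ p'.2 := by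
    refine eq_of_mapOfCompatibleSMul_eq φ (fun a b m => ?_) h.2
    rw [← sub_eq_zero]
    change mapOfCompatibleSMul A ℤ B B M _ - mapOfCompatibleSMul A ℤ B B M _ = 0
    rw [← map_sub, sub_sub_sub_comm, map_sub,
      mapOfCompatibleSMul_tensorBracket_smul_tmul_sub Γ β hanti hleib,
      mapOfCompatibleSMul_derivTensor_smul_tmul_sub, hq a, sub_self]
  simp only [lrProj_apply, semidirectBracket, Prod.mk.injEq, h.1, true_and]
  rw [add_sub_right_comm, add_sub_right_comm _ (derivTensor p'.1 q.2), map_add, map_add]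
  exact congrArg (· + _) hφ

lemma lrProj_semidirectBracket_congr (hanti : ∀ m n, β m n = -β n m)
    (hleib : ∀ (m n : M) (a : A), β m (a • n) = Γ m a • n + a • β m n)
    {p p' q q' : Derivation k B B × B ⊗[ℤ] M} (hp' : p' ∈ lrPullbackInt Γ)
    (hq : q ∈ lrPullbackInt Γ) (hpp' : lrProj A p = lrProj A p')
    (hqq' : lrProj A q = lrProj A q') :
    lrProj A (semidirectBracket β p q) = lrProj A (semidirectBracket β p' q') := by
  rw [lrProj_semidirectBracket_left Γ β hanti hleib hq hpp', semidirectBracket_swap β hanti p',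
    semidirectBracket_swap β hanti p', map_neg, map_neg,
    lrProj_semidirectBracket_left Γ β hanti hleib hp' hqq']

end Descent

section PullbackBracket

variable {k A B M : Type*} [CommRing k] [CommRing A] [CommRing B] [Algebra k A] [Algebra k B]
  [Algebra A B] [AddCommGroup M] [Module A M] (Γ : M →ₗ[A] Derivation k A A)
  (β : M →ₗ[ℤ] M →ₗ[ℤ] M)

noncomputable def lrLift (x : lrPullback k A B M Γ) : Derivation k B B × B ⊗[ℤ] M :=
  (exists_lrProj_eq Γ x.2).choose

lemma lrLift_mem (x : lrPullback k A B M Γ) : lrLift Γ x ∈ lrPullbackInt Γ :=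
  (exists_lrProj_eq Γ x.2).choose_spec.1

lemma lrProj_lrLift (x : lrPullback k A B M Γ) : lrProj A (lrLift Γ x) = x :=
  (exists_lrProj_eq Γ x.2).choose_spec.2

lemma lrLift_fst (x : lrPullback k A B M Γ) :
    (lrLift Γ x).1 = (x : Derivation k B B × B ⊗[A] M).1 :=
  (congrArg Prod.fst (lrProj_lrLift Γ x) :)

noncomputable def lrBracket (hΓlie : ∀ m n, Γ (β m n) = ⁅Γ m, Γ n⁆)
    (x y : lrPullback k A B M Γ) : lrPullback k A B M Γ :=
  ⟨lrProj A (semidirectBracket β (lrLift Γ x) (lrLift Γ y)),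
    (mem_lrPullbackInt_iff Γ).mp
      (semidirectBracket_mem Γ β hΓlie (lrLift_mem Γ x) (lrLift_mem Γ y))⟩

variable {Γ β}

lemma coe_lrBracket_fst (hΓlie : ∀ m n, Γ (β m n) = ⁅Γ m, Γ n⁆)
    (x y : lrPullback k A B M Γ) :
    (lrBracket Γ β hΓlie x y : Derivation k B B × B ⊗[A] M).1 =
      ⁅(x : Derivation k B B × B ⊗[A] M).1, (y : Derivation k B B × B ⊗[A] M).1⁆ :=
  (congrArg₂ (⁅·, ·⁆) (lrLift_fst Γ x) (lrLift_fst Γ y) :)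

lemma coe_lrBracket (hΓlie : ∀ m n, Γ (β m n) = ⁅Γ m, Γ n⁆)
    (hanti : ∀ m n, β m n = -β n m)
    (hleib : ∀ (m n : M) (a : A), β m (a • n) = Γ m a • n + a • β m n)
    {p q : Derivation k B B × B ⊗[ℤ] M} (hp : p ∈ lrPullbackInt Γ)
    {x y : lrPullback k A B M Γ} (hx : lrProj A p = x) (hy : lrProj A q = y) :
    (lrBracket Γ β hΓlie x y : Derivation k B B × B ⊗[A] M) =
      lrProj A (semidirectBracket β p q) :=
  lrProj_semidirectBracket_congr Γ β hanti hleib hp (lrLift_mem Γ y)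
    (by rw [lrProj_lrLift, hx]) (by rw [lrProj_lrLift, hy])

lemma coe_lrBracket_tmul (hΓlie : ∀ m n, Γ (β m n) = ⁅Γ m, Γ n⁆)
    (hanti : ∀ m n, β m n = -β n m)
    (hleib : ∀ (m n : M) (a : A), β m (a • n) = Γ m a • n + a • β m n)
    (ρ ρ' : Derivation k B B) (b c : B) (m n : M)
    (hx : (ρ, b ⊗ₜ[A] m) ∈ lrPullback k A B M Γ)
    (hy : (ρ', c ⊗ₜ[A] n) ∈ lrPullback k A B M Γ) :
    (lrBracket Γ β hΓlie ⟨_, hx⟩ ⟨_, hy⟩ : Derivation k B B × B ⊗[A] M) =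
      (⁅ρ, ρ'⁆, (b * c) ⊗ₜ[A] β m n + ρ c ⊗ₜ[A] n - ρ' b ⊗ₜ[A] m) := by
  rw [coe_lrBracket hΓlie hanti hleib (p := (ρ, b ⊗ₜ m)) (q := (ρ', c ⊗ₜ n))
    ((mem_lrPullbackInt_iff Γ).mpr hx) rfl rfl]
  rfl

lemma lrBracket_add_left (hΓlie : ∀ m n, Γ (β m n) = ⁅Γ m, Γ n⁆)
    (hanti : ∀ m n, β m n = -β n m)
    (hleib : ∀ (m n : M) (a : A), β m (a • n) = Γ m a • n + a • β m n)
    (x x' y : lrPullback k A B M Γ) :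
    lrBracket Γ β hΓlie (x + x') y =
      lrBracket Γ β hΓlie x y + lrBracket Γ β hΓlie x' y := by
  apply Subtype.ext
  rw [coe_lrBracket hΓlie hanti hleib (add_mem (lrLift_mem Γ x) (lrLift_mem Γ x'))
      (by rw [map_add, lrProj_lrLift, lrProj_lrLift, Submodule.coe_add]) (lrProj_lrLift Γ y),
    semidirectBracket_add_left, map_add]
  rfl

lemma lrBracket_add_right (hΓlie : ∀ m n, Γ (β m n) = ⁅Γ m, Γ n⁆)
    (hanti : ∀ m n, β m n = -β n m)
    (hleib : ∀ (m n : M) (a : A), β m (a • n) = Γ m a • n + a • β m n)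
    (x y y' : lrPullback k A B M Γ) :
    lrBracket Γ β hΓlie x (y + y') =
      lrBracket Γ β hΓlie x y + lrBracket Γ β hΓlie x y' := by
  apply Subtype.ext
  rw [coe_lrBracket hΓlie hanti hleib (q := lrLift Γ y + lrLift Γ y') (lrLift_mem Γ x)
      (lrProj_lrLift Γ x) (by rw [map_add, lrProj_lrLift, lrProj_lrLift, Submodule.coe_add]),
    semidirectBracket_add_right, map_add]
  rfl

lemma lrBracket_swap (hΓlie : ∀ m n, Γ (β m n) = ⁅Γ m, Γ n⁆)
    (hanti : ∀ m n, β m n = -β n m) (x y : lrPullback k A B M Γ) :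
    lrBracket Γ β hΓlie x y = -lrBracket Γ β hΓlie y x := by
  apply Subtype.ext
  exact (congrArg (lrProj A) (semidirectBracket_swap β hanti _ _)).trans (map_neg _ _)

lemma lrBracket_jacobi (hΓlie : ∀ m n, Γ (β m n) = ⁅Γ m, Γ n⁆)
    (hanti : ∀ m n, β m n = -β n m)
    (hjac : ∀ m n p, β m (β n p) = β (β m n) p + β n (β m p))
    (hleib : ∀ (m n : M) (a : A), β m (a • n) = Γ m a • n + a • β m n)
    (x y z : lrPullback k A B M Γ) :
    lrBracket Γ β hΓlie x (lrBracket Γ β hΓlie y z) =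
      lrBracket Γ β hΓlie (lrBracket Γ β hΓlie x y) z +
        lrBracket Γ β hΓlie y (lrBracket Γ β hΓlie x z) := by
  apply Subtype.ext
  rw [Submodule.coe_add,
    coe_lrBracket hΓlie hanti hleib (lrLift_mem Γ x) (lrProj_lrLift Γ x) rfl,
    coe_lrBracket hΓlie hanti hleib
      (semidirectBracket_mem Γ β hΓlie (lrLift_mem Γ x) (lrLift_mem Γ y)) rfl
      (lrProj_lrLift Γ z),
    coe_lrBracket hΓlie hanti hleib (lrLift_mem Γ y) (lrProj_lrLift Γ y) rfl,
    semidirectBracket_jacobi β hanti hjac, map_add]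

lemma lrBracket_smul_right (hΓlie : ∀ m n, Γ (β m n) = ⁅Γ m, Γ n⁆)
    (hanti : ∀ m n, β m n = -β n m)
    (hleib : ∀ (m n : M) (a : A), β m (a • n) = Γ m a • n + a • β m n)
    (x y : lrPullback k A B M Γ) (b : B) :
    lrBracket Γ β hΓlie x (b • y) =
      (x : Derivation k B B × B ⊗[A] M).1 b • y + b • lrBracket Γ β hΓlie x y := by
  apply Subtype.ext
  rw [coe_lrBracket hΓlie hanti hleib (q := b • lrLift Γ y) (lrLift_mem Γ x)
      (lrProj_lrLift Γ x) (by rw [map_smul, lrProj_lrLift, Submodule.coe_smul]),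
    semidirectBracket_smul_right, map_add, map_smul, map_smul, lrProj_lrLift]
  rw [lrLift_fst]
  rfl

end PullbackBracket

/-- Let `(A, M)` be a (dg) Lie–Rinehart pair and `f₀ : A → B` a morphism of
cdgas (encoded by the algebra structure `Algebra A B`).  On the pullback
`f₀^!M = Der(B) ×_{Der(A,B)} (B ⊗_A M)` the bracket
`[(ρ, Σ bᵢ⊗mᵢ), (ρ′, Σ cⱼ⊗nⱼ)] = ([ρ,ρ′], Σ bᵢcⱼ⊗[mᵢ,nⱼ] + Σ ρ(cⱼ)⊗nⱼ − Σ ρ′(bᵢ)⊗mᵢ)`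
is well defined, and together with the anchor given by the projection to `Der(B)` it makes
`(B, f₀^!M)` a Lie–Rinehart pair: the bracket is antisymmetric, satisfies the Jacobi identity
and the Leibniz rule, and the projection to `Der(B)` is a morphism of Lie algebras. -/
theorem stmt4 (k A B M : Type*) [CommRing k] [CommRing A] [CommRing B]
    [Algebra k A] [Algebra k B] [Algebra A B]
    [AddCommGroup M] [Module A M]
    (ΓM : M →ₗ[A] Derivation k A A)
    (br : M → M → M)
    -- Lie–Rinehart axioms for `(A, M)`
    (hadd₁ : ∀ m m' n : M, br (m + m') n = br m n + br m' n)
    (hadd₂ : ∀ m n n' : M, br m (n + n') = br m n + br m n')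
    (hanti : ∀ m n : M, br m n = - br n m)
    (hjac : ∀ m n p : M, br m (br n p) = br (br m n) p + br n (br m p))
    (hleib : ∀ (m n : M) (a : A), br m (a • n) = ΓM m a • n + a • br m n)
    (hΓlie : ∀ m n : M, ΓM (br m n) = ⁅ΓM m, ΓM n⁆) :
    ∃ BR : ↥(lrPullback k A B M ΓM) → ↥(lrPullback k A B M ΓM) → ↥(lrPullback k A B M ΓM),
      -- the bracket is given on representatives by the stated formula
      (∀ (ρ ρ' : Derivation k B B) (b c : B) (m n : M)
          (hx : (ρ, b ⊗ₜ[A] m) ∈ lrPullback k A B M ΓM)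
          (hy : (ρ', c ⊗ₜ[A] n) ∈ lrPullback k A B M ΓM),
          (BR ⟨(ρ, b ⊗ₜ[A] m), hx⟩ ⟨(ρ', c ⊗ₜ[A] n), hy⟩ :
              Derivation k B B × (B ⊗[A] M)) =
            (⁅ρ, ρ'⁆, (b * c) ⊗ₜ[A] br m n + ρ c ⊗ₜ[A] n - ρ' b ⊗ₜ[A] m)) ∧
      -- bilinearity (additivity in each slot)
      (∀ x x' y, BR (x + x') y = BR x y + BR x' y) ∧
      (∀ x y y', BR x (y + y') = BR x y + BR x y') ∧
      -- antisymmetry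
      (∀ x y, BR x y = - BR y x) ∧
      -- Jacobi identity
      (∀ x y z, BR x (BR y z) = BR (BR x y) z + BR y (BR x z)) ∧
      -- Leibniz rule with the anchor = projection to `Der(B)`
      (∀ (x y : ↥(lrPullback k A B M ΓM)) (b : B),
          BR x (b • y) = ((x : Derivation k B B × (B ⊗[A] M)).1 b) • y + b • BR x y) ∧
      -- the anchor is a morphism of Lie algebras
      (∀ x y, ((BR x y : ↥(lrPullback k A B M ΓM)) :
          Derivation k B B × (B ⊗[A] M)).1 =
        ⁅(x : Derivation k B B × (B ⊗[A] M)).1, (y : Derivation k B B × (B ⊗[A] M)).1⁆) := by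
  let β : M →ₗ[ℤ] M →ₗ[ℤ] M := LinearMap.ofBiadditive br hadd₁ hadd₂
  exact ⟨lrBracket ΓM β hΓlie,
    coe_lrBracket_tmul (β := β) hΓlie hanti hleib,
    lrBracket_add_left (β := β) hΓlie hanti hleib,
    lrBracket_add_right (β := β) hΓlie hanti hleib,
    lrBracket_swap (β := β) hΓlie hanti,
    lrBracket_jacobi (β := β) hΓlie hanti hjac hleib,
    lrBracket_smul_right (β := β) hΓlie hanti hleib,
    coe_lrBracket_fst (β := β) hΓlie⟩
end

section
/- Let k be a field of characteristic zero, f: A → B a morphism of cdgas of finite type, and (A, M) a nice dg Lie-Rinehart pair: the anchor Γ_M: M → Der(A) is surjective, M is projective as a graded A-module, and −⊗_A M preserves quasi-isomorphisms. Then the pullback f^!M = Der(B) ×_{Der(A,B)} (B⊗_A M) satisfies: (i) its anchor (first projection) is surjective; (ii) as a graded B-module f^!M ≅ Der(B) ⊕ (Ker Γ_M)⊗_A B, hence is projective; so in particular the pullback of a nice LR pair has surjective anchor and projective underlying graded module. -/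
/-!
Since `Ω[A⁄k]` is finite projective, `Der(A, B) = Hom_A(Ω[A⁄k], B) = B ⊗_A Der(A)`, so the map
`Ψ : B ⊗_A M → Der(A, B)` is the base change of the anchor `Γ_M` followed by an isomorphism:
it is surjective, with kernel `ker (B ⊗ Γ_M)`. As `Der(B)` is projective, precomposition
`Der(B) → Der(A, B)` lifts along `Ψ` to some `χ`, and `(ρ, x) ↦ (ρ, x - χ ρ)` identifies the
pullback with `Der(B) × ker Ψ`. Finally `Der(A)` is projective, so `Γ_M` splits; hence
`ker (B ⊗ Γ_M) = B ⊗_A ker Γ_M`, which is projective because `ker Γ_M` is a summand of `M`.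
-/

open TensorProduct

universe u

section Pullback

variable {R D N E : Type*} [Ring R] [AddCommGroup D] [Module R D] [AddCommGroup N] [Module R N]
  [AddCommGroup E] [Module R E] {Φ : D →ₗ[R] E} {Ψ : N →ₗ[R] E}

def LinearMap.eqLocusFstSndEquivOfLift (χ : D →ₗ[R] N) (hχ : Ψ ∘ₗ χ = Φ) :
    LinearMap.eqLocus (Φ ∘ₗ LinearMap.fst R D N) (Ψ ∘ₗ LinearMap.snd R D N) ≃ₗ[R]
      D × LinearMap.ker Ψ where
  toFun p := (p.1.1, ⟨p.1.2 - χ p.1.1, by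
    have := LinearMap.mem_eqLocus.mp p.2
    simp_all [← hχ]⟩)
  invFun q := ⟨(q.1, q.2 + χ q.1), by simp [← hχ]⟩
  map_add' p q := by ext <;> simp; abel
  map_smul' c p := by ext <;> simp [smul_sub]
  left_inv p := by ext <;> simp
  right_inv q := by ext <;> simp

end Pullback

section SplitKernel

variable {A M N : Type*} [CommRing A] [AddCommGroup M] [Module A M] [AddCommGroup N] [Module A N]
  [Module.Projective A N] {Γ : M →ₗ[A] N}

theorem LinearMap.exists_retraction_ker_subtype_of_surjective (hΓ : Function.Surjective Γ) :
    ∃ p : M →ₗ[A] LinearMap.ker Γ, p ∘ₗ (LinearMap.ker Γ).subtype = LinearMap.id :=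
  (Γ.exact_subtype_ker_map.split_tfae'.out 0 1 rfl rfl |>.mp <| .intro Subtype.val_injective <|
    Γ.exists_rightInverse_of_surjective (LinearMap.range_eq_top.2 hΓ)).2

theorem LinearMap.projective_ker_of_surjective [Module.Projective A M]
    (hΓ : Function.Surjective Γ) : Module.Projective A (LinearMap.ker Γ) :=
  have ⟨p, hp⟩ := Γ.exists_retraction_ker_subtype_of_surjective hΓ
  .of_split _ p hp

variable (B : Type*) [CommRing B] [Algebra A B]

noncomputable def LinearMap.kerBaseChangeEquivOfSurjective (hΓ : Function.Surjective Γ) :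
    B ⊗[A] LinearMap.ker Γ ≃ₗ[B] LinearMap.ker (Γ.baseChange B) :=
  let j := (LinearMap.ker Γ).subtype
  have hinj : Function.Injective (j.baseChange B) := by
    obtain ⟨p, hp⟩ := Γ.exists_retraction_ker_subtype_of_surjective hΓ
    refine Function.LeftInverse.injective (g := p.baseChange B) fun y => ?_
    rw [← LinearMap.comp_apply, ← LinearMap.baseChange_comp, hp, LinearMap.baseChange_id,
      LinearMap.id_apply]
  have hrange : LinearMap.range (j.baseChange B) = LinearMap.ker (Γ.baseChange B) := by
    have hexact := lTensor_exact B Γ.exact_subtype_ker_map hΓ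
    rw [← LinearMap.baseChange_eq_ltensor, ← LinearMap.baseChange_eq_ltensor] at hexact
    ext y
    exact (hexact y).symm
  LinearEquiv.ofInjective _ hinj ≪≫ₗ LinearEquiv.ofEq _ _ hrange

end SplitKernel

section DerivationBaseChange

variable (k A B : Type*) [CommRing k] [CommRing A] [CommRing B] [Algebra k A] [Algebra k B]
  [Algebra A B] [IsScalarTower k A B]

noncomputable def derivationBaseChange : B ⊗[A] Derivation k A A →ₗ[B] Derivation k A B :=
  (Algebra.linearMap A B).compDer.liftBaseChange B

@[simp]
theorem derivationBaseChange_tmul (b : B) (δ : Derivation k A A) (a : A) :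
    derivationBaseChange k A B (b ⊗ₜ δ) a = b * algebraMap A B (δ a) := by
  simp [derivationBaseChange]

theorem derivationBaseChange_bijective [Module.Finite A Ω[A⁄k]] [Module.Projective A Ω[A⁄k]] :
    Function.Bijective (derivationBaseChange k A B) := by
  let e : B ⊗[A] Derivation k A A ≃ₗ[A] Derivation k A B :=
    TensorProduct.comm A B _ ≪≫ₗ
      (KaehlerDifferential.linearMapEquivDerivation k A).symm.rTensor B ≪≫ₗ
      dualTensorHomEquiv A Ω[A⁄k] B ≪≫ₗ KaehlerDifferential.linearMapEquivDerivation k A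
  have he : (derivationBaseChange k A B).restrictScalars A = e.toLinearMap := by
    ext b δ a
    simp [e, Algebra.smul_def, mul_comm]
  rw [← LinearMap.coe_restrictScalars A, he]
  exact e.bijective

end DerivationBaseChange

theorem Derivation.projective_of_projective_kaehlerDifferential (k A : Type*) [CommRing k]
    [CommRing A] [Algebra k A] [Module.Finite A Ω[A⁄k]] [Module.Projective A Ω[A⁄k]] :
    Module.Projective A (Derivation k A A) :=
  .of_equiv (KaehlerDifferential.linearMapEquivDerivation k A)

section LieRinehartPullback

variable {k A B M : Type*} [CommRing k] [CommRing A] [CommRing B] [Algebra k A] [Algebra k B]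
  [Algebra A B] [IsScalarTower k A B] [AddCommGroup M] [Module A M]

theorem anchorPush_apply (ΓM : M →ₗ[A] Derivation k A A) (a : A) (x : B ⊗[A] M) :
    anchorPush k A B M ΓM a x = derivationBaseChange k A B (ΓM.baseChange B x) a := by
  induction x using TensorProduct.induction_on with
  | zero => simp
  | tmul b m => simp [anchorPush]
  | add x y hx hy => simp only [map_add, Derivation.add_apply, hx, hy]

theorem lrPullback_eq_eqLocus (ΓM : M →ₗ[A] Derivation k A A) :
    lrPullback k A B M ΓM = LinearMap.eqLocus
      (Derivation.compAlgebraMapL k A B B ∘ₗ LinearMap.fst B _ _)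
      ((derivationBaseChange k A B ∘ₗ ΓM.baseChange B) ∘ₗ LinearMap.snd B _ _) := by
  ext p
  rw [LinearMap.mem_eqLocus, Derivation.ext_iff]
  exact forall_congr' fun a => by rw [anchorPush_apply]; rfl

end LieRinehartPullback

theorem stmt18_general (k A B M : Type u) [Field k] [CommRing A] [CommRing B]
    [Algebra k A] [Algebra k B] [Algebra A B] [IsScalarTower k A B]
    [Algebra.FiniteType k A] [Algebra.FormallySmooth k A]
    [Algebra.FiniteType k B] [Algebra.FormallySmooth k B]
    [AddCommGroup M] [Module A M] [Module.Projective A M]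
    (ΓM : M →ₗ[A] Derivation k A A)
    (hΓsurj : Function.Surjective ΓM) :
    -- (i) the anchor of the pullback (the first projection) is surjective
    (∀ ρ : Derivation k B B, ∃ x : B ⊗[A] M, (ρ, x) ∈ lrPullback k A B M ΓM) ∧
    -- (ii) the pullback splits as `Der(B) ⊕ (Ker Γ_M) ⊗_A B`, and is projective
    Nonempty (↥(lrPullback k A B M ΓM) ≃ₗ[B]
        Derivation k B B × (B ⊗[A] ↥(LinearMap.ker ΓM))) ∧
      Module.Projective B ↥(lrPullback k A B M ΓM) := by
  have := Derivation.projective_of_projective_kaehlerDifferential k A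
  have := Derivation.projective_of_projective_kaehlerDifferential k B
  have := ΓM.projective_ker_of_surjective hΓsurj
  set Ψ := derivationBaseChange k A B ∘ₗ ΓM.baseChange B
  have hΨ : Function.Surjective Ψ :=
    (derivationBaseChange_bijective k A B).2.comp (ΓM.baseChange_surjective B hΓsurj)
  have hkerΨ : LinearMap.ker Ψ = LinearMap.ker (ΓM.baseChange B) :=
    LinearMap.ker_comp_of_ker_eq_bot _ <|
      LinearMap.ker_eq_bot.2 (derivationBaseChange_bijective k A B).1
  obtain ⟨χ, hχ⟩ :=
    Module.projective_lifting_property Ψ (Derivation.compAlgebraMapL k A B B) hΨ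
  let e : lrPullback k A B M ΓM ≃ₗ[B] Derivation k B B × (B ⊗[A] LinearMap.ker ΓM) :=
    LinearEquiv.ofEq _ _ (lrPullback_eq_eqLocus ΓM) ≪≫ₗ
      LinearMap.eqLocusFstSndEquivOfLift χ hχ ≪≫ₗ
      (LinearEquiv.refl B _).prodCongr
        (LinearEquiv.ofEq _ _ hkerΨ ≪≫ₗ (ΓM.kerBaseChangeEquivOfSurjective B hΓsurj).symm)
  refine ⟨fun ρ => ⟨χ ρ, ?_⟩, ⟨e⟩, .of_equiv e.symm⟩
  rw [lrPullback_eq_eqLocus, LinearMap.mem_eqLocus, ← hχ]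
  rfl

/-- Let `k` be a field of characteristic zero, `f : A → B` a morphism of
cdgas of finite type (encoded: `A`, `B` are finite-type, formally smooth `k`-algebras — the
ungraded avatar of "semi-free on finitely many generators" — and `Algebra A B` encodes `f`),
and `(A, M)` a *nice* Lie–Rinehart pair: the anchor `Γ_M : M → Der(A)` is surjective and `M` is
projective.  Then the pullback `f^!M = Der(B) ×_{Der(A,B)} (B ⊗_A M)` satisfies:
(i) its anchor (the first projection) is surjective, and
(ii) as a `B`-module, `f^!M ≅ Der(B) ⊕ (Ker Γ_M) ⊗_A B`, hence it is projective. -/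
theorem stmt18 (k A B M : Type u) [Field k] [CharZero k] [CommRing A] [CommRing B]
    [Algebra k A] [Algebra k B] [Algebra A B] [IsScalarTower k A B]
    [Algebra.FiniteType k A] [Algebra.FormallySmooth k A]
    [Algebra.FiniteType k B] [Algebra.FormallySmooth k B]
    [AddCommGroup M] [Module A M] [Module.Projective A M]
    (ΓM : M →ₗ[A] Derivation k A A)
    (hΓsurj : Function.Surjective ΓM) :
    -- (i) the anchor of the pullback (the first projection) is surjective
    (∀ ρ : Derivation k B B, ∃ x : B ⊗[A] M, (ρ, x) ∈ lrPullback k A B M ΓM) ∧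
    -- (ii) the pullback splits as `Der(B) ⊕ (Ker Γ_M) ⊗_A B`, and is projective
    Nonempty (↥(lrPullback k A B M ΓM) ≃ₗ[B]
        Derivation k B B × (B ⊗[A] ↥(LinearMap.ker ΓM))) ∧
      Module.Projective B ↥(lrPullback k A B M ΓM) :=
  stmt18_general k A B M ΓM hΓsurj
end
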